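/- For every reduced DIME E and every unordered word w: w ⊨ Δ_E if and only if w ⊨ Δ̂_E. -/

import Mathlib

set_option autoImplicit false

universe u v w

/-- An unordered word over an alphabet `σ`: a multiset over `σ`,
viewed as a function giving the number of occurrences of each symbol. -/
def UWord (σ : Type u) : Type u := σ → ℕ

/-- The empty unordered word `ε`. -/
def UWord.zero {σ : Type u} : UWord σ := fun _ => 0

/-- Unordered concatenation (multiset union) of two unordered words. -/
def UWord.add {σ : Type u} (w₁ w₂ : UWord σ) : UWord σ := fun a => w₁ a + w₂ a

/-- The unordered word consisting of a single occurrence of `a`. -/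
def UWord.single {σ : Type u} [DecidableEq σ] (a : σ) : UWord σ :=
  fun b => if b = a then 1 else 0

/-- Unordered concatenation of a list of unordered words. -/
def listSum {σ : Type u} (l : List (UWord σ)) : UWord σ := l.foldr UWord.add UWord.zero

/-- An interval multiplicity `[lo,hi]` (with `hi ∈ ℕ ∪ {∞}`), where the flag
`opt` marks the variant `[lo,hi]?` that additionally allows zero iterations. -/
structure Iv : Type where
  lo : ℕ
  hi : ℕ∞
  opt : Bool

/-- Membership of a number of iterations in the set denoted by an interval multiplicity. -/
def Iv.Mem (I : Iv) (n : ℕ) : Prop :=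
  (I.lo ≤ n ∧ (n : ℕ∞) ≤ I.hi) ∨ (I.opt = true ∧ n = 0)

/-- The multiplicity `1 = [1,1]`. -/
def Iv.one : Iv := ⟨1, 1, false⟩
/-- The multiplicity `? = [0,1]`. -/
def Iv.qmark : Iv := ⟨0, 1, false⟩
/-- The multiplicity `+ = [1,∞]`. -/
def Iv.iplus : Iv := ⟨1, ⊤, false⟩
/-- The multiplicity `* = [0,∞]`. -/
def Iv.istar : Iv := ⟨0, ⊤, false⟩

/-- An atom `(a₁^{I₁} || ⋯ || a_k^{I_k})`: a list of symbols, each with a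
multiplicity `1` (flag `true`) or `?` (flag `false`). -/
abbrev Atom (σ : Type u) : Type u := List (σ × Bool)

/-- A clause `(A₁^{I₁} | ⋯ | A_k^{I_k})`: a list of atoms with interval multiplicities. -/
abbrev Clause (σ : Type u) : Type u := List (Atom σ × Iv)

/-- A disjunctive interval multiplicity expression `(D₁^{I₁} || ⋯ || D_k^{I_k})`
(as raw syntax; well-formedness is `DIME.WF`). -/
structure DIME (σ : Type u) : Type u where
  clauses : List (Clause σ × Iv)

/-- Language of a single symbol with its multiplicity (`1` or `?`) inside an atom. -/
def atomEntryLang {σ : Type u} [DecidableEq σ] (p : σ × Bool) : Set (UWord σ) :=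
  if p.2 = true then {UWord.single p.1} else {UWord.single p.1, UWord.zero}

/-- Unordered concatenation of the languages of the items of a list. -/
def listConcLang {σ : Type u} {α : Type v} (f : α → Set (UWord σ)) :
    List α → Set (UWord σ)
  | [] => {UWord.zero}
  | x :: xs => {w | ∃ w₁ ∈ f x, ∃ w₂ ∈ listConcLang f xs, w = w₁.add w₂}

/-- The language of an atom. -/
def Atom.lang {σ : Type u} [DecidableEq σ] (A : Atom σ) : Set (UWord σ) :=
  listConcLang atomEntryLang A

/-- The language `L(E^I)` obtained by iterating a language `L` according to
an interval multiplicity `I`. -/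
def iterLang {σ : Type u} (L : Set (UWord σ)) (I : Iv) : Set (UWord σ) :=
  {w | (∃ l : List (UWord σ),
          (∀ x ∈ l, x ∈ L) ∧ I.lo ≤ l.length ∧ (l.length : ℕ∞) ≤ I.hi ∧ w = listSum l) ∨
       (I.opt = true ∧ w = UWord.zero)}

/-- The language of a clause: disjunction of its atoms with intervals. -/
def Clause.lang {σ : Type u} [DecidableEq σ] (D : Clause σ) : Set (UWord σ) :=
  {w | ∃ p ∈ D, w ∈ iterLang (Atom.lang p.1) p.2}

/-- The language of a DIME: the unordered concatenation of its clauses with intervals. -/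
def DIME.lang {σ : Type u} [DecidableEq σ] (E : DIME σ) : Set (UWord σ) :=
  listConcLang (fun p => iterLang (Clause.lang p.1) p.2) E.clauses

/-- A clause is simple if all its atoms carry multiplicity `1` or `?`. -/
def Clause.Simple {σ : Type u} (D : Clause σ) : Prop :=
  ∀ p ∈ D, p.2 = Iv.one ∨ p.2 = Iv.qmark

/-- The list of all symbol occurrences in a DIME. -/
def DIME.symbols {σ : Type u} (E : DIME σ) : List σ :=
  E.clauses.flatMap fun p => p.1.flatMap fun q => q.1.map Prod.fst

/-- Well-formedness of a DIME `(D₁^{I₁} || ⋯ || D_k^{I_k})`: each `D_i` is either a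
simple clause with `I_i ∈ {+,*}`, or a clause with `I_i ∈ {1,?}`; moreover no symbol
occurs twice in the whole expression. -/
def DIME.WF {σ : Type u} (E : DIME σ) : Prop :=
  (∀ p ∈ E.clauses,
      (Clause.Simple p.1 ∧ (p.2 = Iv.iplus ∨ p.2 = Iv.istar)) ∨
      (p.2 = Iv.one ∨ p.2 = Iv.qmark)) ∧
  E.symbols.Nodup

/-- Conflicting pairs of siblings `C_E` of a language of unordered words. -/
def Cset {σ : Type u} (L : Set (UWord σ)) : Set (σ × σ) :=
  {p | ∀ w ∈ L, ¬(w p.1 ≠ 0 ∧ w p.2 ≠ 0)}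

/-- Extended cardinality map `N_E` of a language of unordered words. -/
def Nset {σ : Type u} (L : Set (UWord σ)) : Set (σ × ℕ) :=
  {p | ∃ w ∈ L, w p.1 = p.2}

/-- Collections of required symbols `P_E` of a language of unordered words. -/
def Pset {σ : Type u} (L : Set (UWord σ)) : Set (Set σ) :=
  {X | ∀ w ∈ L, ∃ a ∈ X, w a ≠ 0}

/-- Counting dependencies `K_E` of a language of unordered words. -/
def Kset {σ : Type u} (L : Set (UWord σ)) : Set (σ × σ) :=
  {p | ∀ w ∈ L, w p.2 ≤ w p.1}

/-- Satisfaction `w ⊨ Δ_E` of the characterizing tuple `(C_E, N_E, P_E, K_E)`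
of the language `L = L(E)` by an unordered word `w`. -/
def SatTuple {σ : Type u} (L : Set (UWord σ)) (w : UWord σ) : Prop :=
  (∀ p ∈ Cset L, ¬(w p.1 ≠ 0 ∧ w p.2 ≠ 0)) ∧
  (∀ a : σ, (a, w a) ∈ Nset L) ∧
  (∀ X ∈ Pset L, ∃ a ∈ X, w a ≠ 0) ∧
  (∀ p ∈ Kset L, w p.2 ≤ w p.1)

/-- Subsumption `Δ_{E'} ≼ Δ_E` of characterizing tuples, for `L' = L(E')` and `L = L(E)`:
`C_E ⊆ C_{E'}`, `N_{E'} ⊆ N_E`, `P_E ⊆ P_{E'}`, and `K_E ⊆ K_{E'}`. -/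
def TupleLE {σ : Type u} (L' L : Set (UWord σ)) : Prop :=
  Cset L ⊆ Cset L' ∧ Nset L' ⊆ Nset L ∧ Pset L ⊆ Pset L' ∧ Kset L ⊆ Kset L'

/-- Type 1 of a clause with interval in a reduced DIME:
`(A₁|…|A_k)^+` with `k ≥ 2` and every atom containing a symbol with multiplicity `1`. -/
def EntryType1 {σ : Type u} (D : Clause σ) (I : Iv) : Prop :=
  I = Iv.iplus ∧ 2 ≤ D.length ∧ ∀ p ∈ D, p.2 = Iv.one ∧ ∃ q ∈ p.1, q.2 = true

/-- Type 2 of a clause with interval in a reduced DIME: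
`(A₁^{I₁}|…|A_k^{I_k})` where every atom contains a symbol with multiplicity `1`
and `0` belongs to no interval `I_i`. -/
def EntryType2 {σ : Type u} (D : Clause σ) (I : Iv) : Prop :=
  I = Iv.one ∧ ∀ p ∈ D, (∃ q ∈ p.1, q.2 = true) ∧ ¬ p.2.Mem 0

/-- Type 3 of a clause with interval in a reduced DIME:
`(A₁^{I₁}|…|A_k^{I_k})` where `0` belongs to every interval `I_i`. -/
def EntryType3 {σ : Type u} (D : Clause σ) (I : Iv) : Prop :=
  I = Iv.one ∧ ∀ p ∈ D, p.2.Mem 0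

/-- A DIME is reduced if each of its clauses with interval has type 1, 2 or 3. -/
def DIME.Reduced {σ : Type u} (E : DIME σ) : Prop :=
  ∀ p ∈ E.clauses, EntryType1 p.1 p.2 ∨ EntryType2 p.1 p.2 ∨ EntryType3 p.1 p.2

/-- `a = Φ(A)`: `a` is the smallest symbol of the atom `A` carrying multiplicity `1`. -/
def IsPhi {σ : Type u} [LinearOrder σ] (A : Atom σ) (a : σ) : Prop :=
  (a, true) ∈ A ∧ ∀ b : σ, (b, true) ∈ A → a ≤ b

/-- `n ∈ N̂_E(a)`: the compact representation of the extended cardinality map of a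
reduced DIME `E`.  `N̂_E(a) = [0,0]` if `a` occurs in no clause of `E`; `[0,∞]` if `a`
occurs in a clause of type 1; `I^A` if `I^a = 1` and the atom `A` containing `a` is the
unique atom of its clause (of type 2 or 3); `I^A ∪ {0}` if `I^a = 1` and `A` is one of at
least two atoms of its clause (of type 2 or 3); `[0, max(I^A)]` if `I^a = ?`. -/
def DIME.NhatMem {σ : Type u} [LinearOrder σ] (E : DIME σ) (a : σ) (n : ℕ) : Prop :=
  ((a ∉ E.symbols) ∧ n = 0) ∨
  (∃ p ∈ E.clauses, EntryType1 p.1 p.2 ∧ ∃ q ∈ p.1, ∃ r ∈ q.1, r.1 = a) ∨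
  (∃ p ∈ E.clauses, (EntryType2 p.1 p.2 ∨ EntryType3 p.1 p.2) ∧
      ∃ q ∈ p.1, (a, true) ∈ q.1 ∧
        ((p.1.length = 1 ∧ q.2.Mem n) ∨ (2 ≤ p.1.length ∧ (q.2.Mem n ∨ n = 0)))) ∨
  (∃ p ∈ E.clauses, (EntryType2 p.1 p.2 ∨ EntryType3 p.1 p.2) ∧
      ∃ q ∈ p.1, (a, false) ∈ q.1 ∧ (n : ℕ∞) ≤ q.2.hi)

/-- `X ∈ P̂_E`: the compact representation of the collections of required symbols of a
reduced DIME `E`: the sets `Φ(D^I) = {Φ(A) | A atom of D}` for the clauses with interval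
`D^I` of type 1 or 2 of `E`. -/
def DIME.PhatMem {σ : Type u} [LinearOrder σ] (E : DIME σ) (X : Set σ) : Prop :=
  ∃ p ∈ E.clauses, (EntryType1 p.1 p.2 ∨ EntryType2 p.1 p.2) ∧
    X = {a | ∃ q ∈ p.1, IsPhi q.1 a}

/-- Satisfaction `w ⊨ Δ̂_E` of the compact representation `(C_E, N̂_E, P̂_E, K_E)` of the
characterizing tuple of a reduced DIME `E`. -/
def DIME.SatHat {σ : Type u} [LinearOrder σ] (E : DIME σ) (w : UWord σ) : Prop :=
  (∀ p ∈ Cset (DIME.lang E), ¬(w p.1 ≠ 0 ∧ w p.2 ≠ 0)) ∧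
  (∀ a : σ, E.NhatMem a (w a)) ∧
  (∀ X : Set σ, E.PhatMem X → ∃ a ∈ X, w a ≠ 0) ∧
  (∀ p ∈ Kset (DIME.lang E), w p.2 ≤ w p.1)

/-- The symbols implied by a language (of a DIME `E`) in the presence of a set of
symbols `X`: `impl_E(X) = X ∪ {a | ∃ b ∈ X, (a,b) ∈ K_E ∧ (b,a) ∈ K_E}`. -/
def implSet {σ : Type u} (L : Set (UWord σ)) (X : Set σ) : Set σ :=
  X ∪ {a | ∃ b ∈ X, (a, b) ∈ Kset L ∧ (b, a) ∈ Kset L}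

/-- Subsumption `Δ̂_{E'} ≼ Δ̂_E` of the compact representations of the characterizing
tuples of two reduced DIMEs. -/
def HatLE {σ : Type u} [LinearOrder σ] (E' E : DIME σ) : Prop :=
  Cset (DIME.lang E) ⊆ Cset (DIME.lang E') ∧
  Kset (DIME.lang E) ⊆ Kset (DIME.lang E') ∧
  (∀ a : σ, ∀ n : ℕ, DIME.NhatMem E' a n → DIME.NhatMem E a n) ∧
  (∀ X : Set σ, DIME.PhatMem E X →
      ∃ Y : Set σ, DIME.PhatMem E' Y ∧ Y ⊆ implSet (DIME.lang E') X)

/-!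
Both tuples contain `C_E` and `K_E`, so only the `N`- and `P`-components need comparing. As no
symbol occurs twice in `E`, a word of `L(E)` agrees on the symbols of each clause with a word of
that clause, and any choice of one word per clause assembles to a word of `L(E)`. In one
iteration of an atom the symbols of multiplicity `1` occur equally often and the optional ones
at most as often as them; reading off the possible counts gives `N_E ⊆ N̂_E` and `P̂_E ⊆ P_E`.

Conversely let `w ⊨ Δ̂_E`. For a type 1 or 2 clause, `P̂_E` yields an atom `A` with
`w(Φ(A)) ≠ 0`, and `K_E` (equal counts within `A`) spreads this to all `1`-symbols of `A`. Hence
for any set `X` on which `w` vanishes every clause has a word avoiding `X` (iterate `A` as often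
as `N̂_E` allows), so each `X ∈ P_E` meets `w`. For `(a, w(a)) ∈ N_E`, iterate the atom of `a`
exactly `w(a)` times (padding with iterations without `a` when `a` is optional) and fill the other
clauses arbitrarily.
-/

section Words

variable {σ : Type*}

@[simp] lemma UWord.add_apply (u v : UWord σ) (a : σ) : u.add v a = u a + v a := rfl

@[simp] lemma UWord.zero_apply (a : σ) : (UWord.zero : UWord σ) a = 0 := rfl

lemma listSum_apply (l : List (UWord σ)) (a : σ) : listSum l a = (l.map fun x => x a).sum := by
  induction l with
  | nil => rfl
  | cons x l ih => exact congrArg (x a + ·) ih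

lemma listSum_replicate_apply (n : ℕ) (x : UWord σ) (a : σ) :
    listSum (List.replicate n x) a = n * x a := by
  simp [listSum_apply]

lemma listSum_append_apply (l₁ l₂ : List (UWord σ)) (a : σ) :
    listSum (l₁ ++ l₂) a = listSum l₁ a + listSum l₂ a := by
  simp [listSum_apply]

lemma listSum_induction {P : UWord σ → Prop} (h0 : P UWord.zero)
    (hadd : ∀ u v, P u → P v → P (u.add v))
    {l : List (UWord σ)} (hl : ∀ x ∈ l, P x) : P (listSum l) := by
  induction l with
  | nil => exact h0
  | cons x l ih =>
    exact hadd x _ (hl x List.mem_cons_self) (ih fun y hy => hl y (List.mem_cons_of_mem x hy))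

lemma iterLang_induction {P : UWord σ → Prop} (h0 : P UWord.zero)
    (hadd : ∀ u v, P u → P v → P (u.add v)) {L : Set (UWord σ)} {I : Iv}
    (hL : ∀ v ∈ L, P v) : ∀ u ∈ iterLang L I, P u := by
  rintro u (⟨l, hl, -, -, rfl⟩ | ⟨-, rfl⟩)
  · exact listSum_induction h0 hadd fun x hx => hL x (hl x hx)
  · exact h0

lemma listConcLang_induction {α : Type*} {P : UWord σ → Prop} (h0 : P UWord.zero)
    (hadd : ∀ u v, P u → P v → P (u.add v)) {f : α → Set (UWord σ)}
    {l : List α} (hl : ∀ x ∈ l, ∀ v ∈ f x, P v) : ∀ u ∈ listConcLang f l, P u := by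
  induction l with
  | nil => rintro _ rfl; exact h0
  | cons x l ih =>
    rintro _ ⟨v, hv, u, hu, rfl⟩
    exact hadd v u (hl x List.mem_cons_self v hv)
      (ih (fun y hy => hl y (List.mem_cons_of_mem x hy)) u hu)

lemma exists_mem_listConcLang {α : Type*} {P : UWord σ → Prop} (h0 : P UWord.zero)
    (hadd : ∀ u v, P u → P v → P (u.add v)) {f : α → Set (UWord σ)}
    {l : List α} (hl : ∀ x ∈ l, ∃ v ∈ f x, P v) : ∃ u ∈ listConcLang f l, P u := by
  induction l with
  | nil => exact ⟨UWord.zero, rfl, h0⟩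
  | cons x l ih =>
    obtain ⟨v, hv, hPv⟩ := hl x List.mem_cons_self
    obtain ⟨u, hu, hPu⟩ := ih fun y hy => hl y (List.mem_cons_of_mem x hy)
    exact ⟨v.add u, ⟨v, hv, u, hu, rfl⟩, hadd v u hPv hPu⟩

lemma Iv.Mem.cast_le_hi {I : Iv} {m n : ℕ} (hm : I.Mem m) (hnm : n ≤ m) : (n : ℕ∞) ≤ I.hi := by
  rcases hm with ⟨-, hhi⟩ | ⟨-, rfl⟩
  · exact (Nat.cast_le.2 hnm).trans hhi
  · simp [Nat.le_zero.1 hnm]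

lemma Iv.Mem.eq_zero_of_hi_lt_lo {I : Iv} {m : ℕ} (hm : I.Mem m) (hI : I.hi < I.lo) : m = 0 := by
  rcases hm with ⟨hlo, hhi⟩ | ⟨-, rfl⟩
  · exact absurd (hhi.trans_lt hI) (not_lt.2 (Nat.cast_le.2 hlo))
  · rfl

lemma listSum_mem_iterLang {L : Set (UWord σ)} {I : Iv} {l : List (UWord σ)}
    (hl : ∀ x ∈ l, x ∈ L) (hI : I.Mem l.length) : listSum l ∈ iterLang L I := by
  rcases hI with ⟨hlo, hhi⟩ | ⟨hopt, hlen⟩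
  · exact Or.inl ⟨l, hl, hlo, hhi, rfl⟩
  · rw [List.length_eq_zero_iff.1 hlen]
    exact Or.inr ⟨hopt, rfl⟩

lemma mem_iterLang_one {L : Set (UWord σ)} {v : UWord σ} : v ∈ iterLang L Iv.one ↔ v ∈ L := by
  constructor
  · rintro (⟨l, hl, hlo, hhi, rfl⟩ | ⟨h, -⟩)
    · obtain ⟨x, rfl⟩ : ∃ x, l = [x] :=
        List.length_eq_one_iff.1 <| le_antisymm (Nat.cast_le_one.1 hhi) hlo
      exact hl x List.mem_cons_self
    · exact absurd h Bool.false_ne_true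
  · intro hv
    convert listSum_mem_iterLang (I := Iv.one) (l := [v]) (by simpa using hv)
      (by simp [Iv.Mem, Iv.one])
    funext a
    simp [listSum_apply]

lemma exists_le_of_mem_iterLang {L : Set (UWord σ)} {I : Iv} (hI : ¬ I.Mem 0) {v : UWord σ}
    (hv : v ∈ iterLang L I) : ∃ x ∈ L, ∀ s, x s ≤ v s := by
  rcases hv with ⟨_ | ⟨x, l⟩, hl, hlo, -, rfl⟩ | ⟨hopt, -⟩
  · exact absurd (Or.inl ⟨hlo, by simp⟩) hI
  · exact ⟨x, hl x List.mem_cons_self, fun s => by simp [listSum_apply]⟩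
  · exact absurd (Or.inr ⟨hopt, rfl⟩) hI

end Words

section Concatenation

variable {σ α : Type*} {f : α → Set (UWord σ)} {g : α → List σ}

lemma eq_of_mem_flatMap_of_nodup {β : Type*} {l : List α} {h : α → List β}
    (hnd : (l.flatMap h).Nodup) {x y : α} (hx : x ∈ l) (hy : y ∈ l) {b : β}
    (hbx : b ∈ h x) (hby : b ∈ h y) : x = y := by
  have : Std.Symm (Function.onFun List.Disjoint h) := ⟨fun _ _ hd => hd.symm⟩
  by_contra hxy
  exact (List.nodup_flatMap.1 hnd).2.forall hx hy hxy hbx hby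

lemma listConcLang_apply_eq_zero (hsupp : ∀ x, ∀ v ∈ f x, ∀ s ∉ g x, v s = 0)
    {l : List α} {s : σ} (hs : s ∉ l.flatMap g) : ∀ u ∈ listConcLang f l, u s = 0 :=
  listConcLang_induction (P := fun u => u s = 0) rfl (fun u v hu hv => by simp [hu, hv])
    fun x hx v hv => hsupp x v hv s fun h => hs (List.mem_flatMap.2 ⟨x, hx, h⟩)

lemma exists_eqOn_of_mem_listConcLang (hsupp : ∀ x, ∀ v ∈ f x, ∀ s ∉ g x, v s = 0)
    {l : List α} (hnd : (l.flatMap g).Nodup) {u : UWord σ} (hu : u ∈ listConcLang f l)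
    {x : α} (hx : x ∈ l) : ∃ v ∈ f x, ∀ a ∈ g x, u a = v a := by
  induction l generalizing u with
  | nil => simp at hx
  | cons y l ih =>
    obtain ⟨w₁, hw₁, w₂, hw₂, rfl⟩ := hu
    rw [List.flatMap_cons, List.nodup_append] at hnd
    by_cases hxy : x = y
    · subst hxy
      refine ⟨w₁, hw₁, fun a ha => ?_⟩
      have hw₂a := listConcLang_apply_eq_zero hsupp (fun h => hnd.2.2 a ha a h rfl) w₂ hw₂
      simp [hw₂a]
    · have hxl := (List.mem_cons.1 hx).resolve_left hxy
      obtain ⟨v, hv, hw₂v⟩ := ih hnd.2.1 hw₂ hxl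
      refine ⟨v, hv, fun a ha => ?_⟩
      have hw₁a := hsupp y w₁ hw₁ a fun h => hnd.2.2 a h a (List.mem_flatMap.2 ⟨x, hxl, ha⟩) rfl
      simp [hw₁a, hw₂v a ha]

lemma exists_mem_listConcLang_eqOn (hsupp : ∀ x, ∀ v ∈ f x, ∀ s ∉ g x, v s = 0)
    {l : List α} (hnd : (l.flatMap g).Nodup) (hne : ∀ y ∈ l, (f y).Nonempty)
    {x : α} (hx : x ∈ l) {v : UWord σ} (hv : v ∈ f x) :
    ∃ u ∈ listConcLang f l, ∀ a ∈ g x, u a = v a := by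
  induction l with
  | nil => simp at hx
  | cons y l ih =>
    rw [List.flatMap_cons, List.nodup_append] at hnd
    have hne' : ∀ z ∈ l, (f z).Nonempty := fun z hz => hne z (List.mem_cons_of_mem y hz)
    by_cases hxy : x = y
    · subst hxy
      obtain ⟨w, hw, -⟩ := exists_mem_listConcLang (P := fun _ => True) trivial
        (fun _ _ _ _ => trivial) fun z hz => (hne' z hz).imp fun w hw => ⟨hw, trivial⟩
      refine ⟨v.add w, ⟨v, hv, w, hw, rfl⟩, fun a ha => ?_⟩
      have hwa := listConcLang_apply_eq_zero hsupp (fun h => hnd.2.2 a ha a h rfl) w hw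
      simp [hwa]
    · have hxl := (List.mem_cons.1 hx).resolve_left hxy
      obtain ⟨w, hw, hwv⟩ := ih hnd.2.1 hne' hxl
      obtain ⟨w₀, hw₀⟩ := hne y List.mem_cons_self
      refine ⟨w₀.add w, ⟨w₀, hw₀, w, hw, rfl⟩, fun a ha => ?_⟩
      have hw₀a := hsupp y w₀ hw₀ a fun h => hnd.2.2 a h a (List.mem_flatMap.2 ⟨x, hxl, ha⟩) rfl
      simp [hw₀a, hwv a ha]

end Concatenation

section Atoms

variable {σ : Type*}

def Atom.symbols (A : Atom σ) : List σ := A.map Prod.fst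

def Atom.trueSymbols (A : Atom σ) : Set σ := {s | (s, true) ∈ A}

def Clause.symbols (D : Clause σ) : List σ := D.flatMap fun q => q.1.symbols

lemma Clause.mem_symbols_of_mem {D : Clause σ} {q : Atom σ × Iv} (hq : q ∈ D) {r : σ × Bool}
    (hr : r ∈ q.1) : r.1 ∈ D.symbols :=
  List.mem_flatMap.2 ⟨q, hq, List.mem_map_of_mem hr⟩

lemma Clause.nodup_atom_symbols {D : Clause σ} (hD : D.symbols.Nodup) {q : Atom σ × Iv}
    (hq : q ∈ D) : q.1.symbols.Nodup :=
  (List.nodup_flatMap.1 hD).1 q hq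

variable [DecidableEq σ]

lemma mem_atomEntryLang_iff {r : σ × Bool} {v : UWord σ} :
    v ∈ atomEntryLang r ↔ (v r.1 ≤ 1 ∧ (r.2 = true → v r.1 = 1)) ∧ ∀ s ≠ r.1, v s = 0 := by
  have hsingle : ∀ v : UWord σ, v = UWord.single r.1 ↔ v r.1 = 1 ∧ ∀ s ≠ r.1, v s = 0 := by
    intro v
    refine ⟨by rintro rfl; simp +contextual [UWord.single], fun ⟨h1, h0⟩ => funext fun s => ?_⟩
    by_cases hs : s = r.1 <;> simp [UWord.single, hs, h1, h0]
  have hzero : ∀ v : UWord σ, v = UWord.zero ↔ v r.1 = 0 ∧ ∀ s ≠ r.1, v s = 0 := by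
    intro v
    refine ⟨by rintro rfl; simp, fun ⟨h1, h0⟩ => funext fun s => ?_⟩
    by_cases hs : s = r.1 <;> simp [hs, h1, h0]
  obtain ⟨a, _ | _⟩ := r
  · simp only [atomEntryLang, Bool.false_eq_true, if_false, Set.mem_insert_iff,
      Set.mem_singleton_iff, hsingle, hzero]
    grind
  · simp only [atomEntryLang, if_true, Set.mem_singleton_iff, hsingle]
    grind

lemma Atom.mem_lang_iff {A : Atom σ} (hA : A.symbols.Nodup) {v : UWord σ} :
    v ∈ A.lang ↔ (∀ r ∈ A, v r.1 ≤ 1 ∧ (r.2 = true → v r.1 = 1)) ∧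
      ∀ s ∉ A.symbols, v s = 0 := by
  induction A generalizing v with
  | nil =>
    refine ⟨(by rintro rfl; simp), fun h => funext fun s => h.2 s (by simp [Atom.symbols])⟩
  | cons r A ih =>
    simp only [Atom.symbols, List.map_cons, List.nodup_cons] at hA
    have hne : ∀ r' ∈ A, r'.1 ≠ r.1 := fun r' hr' h => hA.1 (h ▸ List.mem_map_of_mem hr')
    simp only [Atom.lang, listConcLang] at ih ⊢
    constructor
    · rintro ⟨w₁, hw₁, w₂, hw₂, rfl⟩
      obtain ⟨hw₁r, hw₁0⟩ := mem_atomEntryLang_iff.1 hw₁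
      obtain ⟨hw₂A, hw₂0⟩ := (ih hA.2).1 hw₂
      refine ⟨fun r' hr' => ?_, fun s hs => ?_⟩
      · rcases List.mem_cons.1 hr' with rfl | hr'
        · simpa [hw₂0 r'.1 hA.1] using hw₁r
        · simpa [hw₁0 _ (hne r' hr')] using hw₂A r' hr'
      · simp only [Atom.symbols, List.map_cons, List.mem_cons, not_or] at hs
        simp [hw₁0 s hs.1, hw₂0 s hs.2]
    · rintro ⟨hvA, hv0⟩
      refine ⟨fun s => if s = r.1 then v s else 0, mem_atomEntryLang_iff.2 ?_,
        fun s => if s = r.1 then 0 else v s, (ih hA.2).2 ⟨fun r' hr' => ?_, fun s hs => ?_⟩,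
        funext fun s => ?_⟩
      · simpa +contextual using hvA r List.mem_cons_self
      · simpa [hne r' hr'] using hvA r' (List.mem_cons_of_mem r hr')
      · by_cases hsr : s = r.1
        · simp [hsr]
        · simp only [hsr, if_false]
          refine hv0 s ?_
          simp only [Atom.symbols, List.map_cons, List.mem_cons, not_or]
          exact ⟨hsr, hs⟩
      · show v s = (if s = r.1 then v s else 0) + (if s = r.1 then 0 else v s)
        split_ifs <;> simp

lemma Atom.apply_eq_zero_of_mem_lang {A : Atom σ} {v : UWord σ} (hv : v ∈ A.lang) {s : σ}
    (hs : s ∉ A.symbols) : v s = 0 :=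
  listConcLang_apply_eq_zero (g := fun r => [r.1])
    (fun _ _ hw s hs => (mem_atomEntryLang_iff.1 hw).2 s (by simpa using hs))
    (by simpa [Atom.symbols] using hs) v hv

lemma Atom.indicator_mem_lang {A : Atom σ} (hA : A.symbols.Nodup) {S : Set σ}
    (hT : A.trueSymbols ⊆ S) (hS : ∀ s ∈ S, s ∈ A.symbols) :
    (S.indicator 1 : UWord σ) ∈ A.lang := by
  refine (Atom.mem_lang_iff hA).2 ⟨fun r hr => ⟨?_, fun h => ?_⟩, fun s hs => ?_⟩
  · by_cases h : r.1 ∈ S <;> simp [h]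
  · simp [hT (show (r.1, true) ∈ A from h ▸ hr)]
  · exact Set.indicator_of_notMem (fun h => hs (hS s h)) _

lemma Atom.exists_of_mem_iterLang {A : Atom σ} (hA : A.symbols.Nodup) {J : Iv} {v : UWord σ}
    (hv : v ∈ iterLang A.lang J) :
    ∃ m, J.Mem m ∧ ∀ r ∈ A, v r.1 ≤ m ∧ (r.2 = true → v r.1 = m) := by
  rcases hv with ⟨l, hl, hlo, hhi, rfl⟩ | ⟨hopt, rfl⟩
  · refine ⟨l.length, Or.inl ⟨hlo, hhi⟩, fun r hr => ?_⟩
    have hlr := fun x hx => ((Atom.mem_lang_iff hA).1 (hl x hx)).1 r hr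
    rw [listSum_apply]
    constructor
    · simpa using List.sum_le_card_nsmul (l.map fun x => x r.1) 1
        (by simpa using fun x hx => (hlr x hx).1)
    · intro hr2
      simpa using List.sum_eq_card_nsmul (l.map fun x => x r.1) 1
        (by simpa using fun x hx => (hlr x hx).2 hr2)
  · exact ⟨0, Or.inr ⟨hopt, rfl⟩, fun r _ => by simp⟩

lemma Atom.apply_eq_zero_of_mem_iterLang {A : Atom σ} {J : Iv} {v : UWord σ}
    (hv : v ∈ iterLang A.lang J) {s : σ} (hs : s ∉ A.symbols) : v s = 0 :=
  iterLang_induction (P := fun u => u s = 0) rfl (fun _ _ hu hv => by simp [hu, hv])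
    (fun _ hx => Atom.apply_eq_zero_of_mem_lang hx hs) v hv

end Atoms

section Clauses

variable {σ : Type*} [DecidableEq σ] {D : Clause σ}

lemma Clause.apply_eq_zero_of_mem_iterLang {I : Iv} {v : UWord σ} (hv : v ∈ iterLang D.lang I)
    {s : σ} (hs : s ∉ D.symbols) : v s = 0 :=
  iterLang_induction (P := fun u => u s = 0) rfl (fun _ _ hu hv => by simp [hu, hv])
    (fun _ hx => by
      obtain ⟨q, hq, hx⟩ := hx
      exact Atom.apply_eq_zero_of_mem_iterLang hx fun h => hs (List.mem_flatMap.2 ⟨q, hq, h⟩))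
    v hv

lemma Clause.exists_of_mem_lang (hD : D.symbols.Nodup) {v : UWord σ} (hv : v ∈ D.lang)
    {q : Atom σ × Iv} (hq : q ∈ D) :
    (∃ m, q.2.Mem m ∧ ∀ r ∈ q.1, v r.1 ≤ m ∧ (r.2 = true → v r.1 = m)) ∨
      ((∀ r ∈ q.1, v r.1 = 0) ∧ ∃ q' ∈ D, q' ≠ q) := by
  obtain ⟨q', hq', hv'⟩ := hv
  by_cases h : q' = q
  · subst h
    exact Or.inl (Atom.exists_of_mem_iterLang (Clause.nodup_atom_symbols hD hq') hv')
  · refine Or.inr ⟨fun r hr => Atom.apply_eq_zero_of_mem_iterLang hv' fun hr' => h ?_, q', hq', h⟩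
    exact eq_of_mem_flatMap_of_nodup hD hq' hq hr' (List.mem_map_of_mem hr)

lemma Clause.apply_eq_apply_of_mem_iterLang (hD : D.symbols.Nodup) {q : Atom σ × Iv}
    (hq : q ∈ D) {s t : σ} (hs : (s, true) ∈ q.1) (ht : (t, true) ∈ q.1) {I : Iv}
    {v : UWord σ} (hv : v ∈ iterLang D.lang I) : v s = v t :=
  iterLang_induction (P := fun u => u s = u t) rfl (fun _ _ hu hv => by simp [hu, hv])
    (fun _ hx => by
      rcases Clause.exists_of_mem_lang hD hx hq with ⟨m, -, hm⟩ | ⟨h0, -⟩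
      · exact ((hm _ hs).2 rfl).trans ((hm _ ht).2 rfl).symm
      · exact (h0 _ hs).trans (h0 _ ht).symm) v hv

lemma Clause.exists_forall_ne_zero_of_mem_iterLang (hD : D.symbols.Nodup) {I : Iv}
    (hI : ¬ I.Mem 0) (hD0 : ∀ q ∈ D, ¬ q.2.Mem 0) {v : UWord σ} (hv : v ∈ iterLang D.lang I) :
    ∃ q ∈ D, ∀ s, (s, true) ∈ q.1 → v s ≠ 0 := by
  obtain ⟨x, ⟨q, hq, hx⟩, hxv⟩ := exists_le_of_mem_iterLang hI hv
  obtain ⟨m, hm, hxm⟩ := Atom.exists_of_mem_iterLang (Clause.nodup_atom_symbols hD hq) hx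
  refine ⟨q, hq, fun s hs => ?_⟩
  have hxs : x s = m := (hxm _ hs).2 rfl
  have hm0 : m ≠ 0 := by rintro rfl; exact hD0 q hq hm
  have := hxv s
  omega

end Clauses

section Expressions

variable {σ : Type*} {E : DIME σ}

lemma DIME.mem_symbols_iff {a : σ} :
    a ∈ E.symbols ↔ ∃ p ∈ E.clauses, ∃ q ∈ p.1, ∃ r ∈ q.1, r.1 = a := by
  simp only [DIME.symbols, List.mem_flatMap, List.mem_map]

lemma DIME.nodup_clause_symbols (h : E.symbols.Nodup) {p : Clause σ × Iv} (hp : p ∈ E.clauses) :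
    p.1.symbols.Nodup :=
  (List.nodup_flatMap.1 h).1 p hp

lemma DIME.eq_of_mem_of_fst_eq (h : E.symbols.Nodup) {p p' : Clause σ × Iv} {q q' : Atom σ × Iv}
    {r r' : σ × Bool} (hp : p ∈ E.clauses) (hq : q ∈ p.1) (hr : r ∈ q.1) (hp' : p' ∈ E.clauses)
    (hq' : q' ∈ p'.1) (hr' : r' ∈ q'.1) (hrr : r.1 = r'.1) : p = p' ∧ q = q' ∧ r = r' := by
  obtain rfl : p = p' := eq_of_mem_flatMap_of_nodup h hp hp' (Clause.mem_symbols_of_mem hq hr)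
    (hrr ▸ Clause.mem_symbols_of_mem hq' hr')
  have hD := DIME.nodup_clause_symbols h hp
  obtain rfl : q = q' := eq_of_mem_flatMap_of_nodup hD hq hq' (List.mem_map_of_mem hr)
    (hrr ▸ List.mem_map_of_mem hr')
  exact ⟨rfl, rfl, List.inj_on_of_nodup_map (Clause.nodup_atom_symbols hD hq) hr hr' hrr⟩

lemma notMem_zero_of_entryType1_or_entryType2 {D : Clause σ} {I : Iv}
    (h : EntryType1 D I ∨ EntryType2 D I) :
    ¬ I.Mem 0 ∧ ∀ q ∈ D, (∃ r ∈ q.1, r.2 = true) ∧ ¬ q.2.Mem 0 := by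
  rcases h with ⟨rfl, -, h⟩ | ⟨rfl, h⟩
  · refine ⟨by simp [Iv.Mem, Iv.iplus], fun q hq => ⟨(h q hq).2, ?_⟩⟩
    simp [(h q hq).1, Iv.Mem, Iv.one]
  · exact ⟨by simp [Iv.Mem, Iv.one], h⟩

variable [DecidableEq σ]

lemma DIME.apply_eq_zero_of_mem_lang {u : UWord σ} (hu : u ∈ E.lang) {s : σ}
    (hs : s ∉ E.symbols) : u s = 0 :=
  listConcLang_apply_eq_zero (fun _ _ hv _ hs => Clause.apply_eq_zero_of_mem_iterLang hv hs) hs u hu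

lemma DIME.exists_eqOn_of_mem_lang (h : E.symbols.Nodup) {u : UWord σ} (hu : u ∈ E.lang)
    {p : Clause σ × Iv} (hp : p ∈ E.clauses) :
    ∃ v ∈ iterLang p.1.lang p.2, ∀ a ∈ p.1.symbols, u a = v a :=
  exists_eqOn_of_mem_listConcLang (fun _ _ hv _ hs => Clause.apply_eq_zero_of_mem_iterLang hv hs)
    h hu hp

lemma DIME.exists_mem_lang_eqOn (h : E.symbols.Nodup)
    (hne : ∀ p ∈ E.clauses, (iterLang p.1.lang p.2).Nonempty) {p : Clause σ × Iv}
    (hp : p ∈ E.clauses) {v : UWord σ} (hv : v ∈ iterLang p.1.lang p.2) :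
    ∃ u ∈ E.lang, ∀ a ∈ p.1.symbols, u a = v a :=
  exists_mem_listConcLang_eqOn (fun _ _ hv _ hs => Clause.apply_eq_zero_of_mem_iterLang hv hs)
    h hne hp hv

lemma DIME.apply_eq_apply_of_mem_lang (h : E.symbols.Nodup) {p : Clause σ × Iv}
    (hp : p ∈ E.clauses) {q : Atom σ × Iv} (hq : q ∈ p.1) {s t : σ} (hs : (s, true) ∈ q.1)
    (ht : (t, true) ∈ q.1) {u : UWord σ} (hu : u ∈ E.lang) : u s = u t := by
  obtain ⟨v, hv, huv⟩ := DIME.exists_eqOn_of_mem_lang h hu hp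
  rw [huv s (Clause.mem_symbols_of_mem hq hs), huv t (Clause.mem_symbols_of_mem hq ht)]
  exact Clause.apply_eq_apply_of_mem_iterLang (DIME.nodup_clause_symbols h hp) hq hs ht hv

lemma DIME.apply_eq_zero_of_hi_lt_lo (h : E.symbols.Nodup) {p : Clause σ × Iv}
    (hp : p ∈ E.clauses) (hone : p.2 = Iv.one) {q : Atom σ × Iv} (hq : q ∈ p.1)
    (hlt : q.2.hi < q.2.lo) {r : σ × Bool} (hr : r ∈ q.1) {u : UWord σ} (hu : u ∈ E.lang) :
    u r.1 = 0 := by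
  obtain ⟨v, hv, huv⟩ := DIME.exists_eqOn_of_mem_lang h hu hp
  rw [hone, mem_iterLang_one] at hv
  rw [huv _ (Clause.mem_symbols_of_mem hq hr)]
  rcases Clause.exists_of_mem_lang (DIME.nodup_clause_symbols h hp) hv hq with
    ⟨m, hm, hvm⟩ | ⟨hv0, -⟩
  · exact Nat.le_zero.1 (hm.eq_zero_of_hi_lt_lo hlt ▸ (hvm r hr).1)
  · exact hv0 r hr

end Expressions

section Reduced

variable {σ : Type*} [LinearOrder σ] {E : DIME σ}

lemma exists_isPhi {A : Atom σ} (h : ∃ r ∈ A, r.2 = true) : ∃ a, IsPhi A a := by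
  obtain ⟨⟨b, c⟩, hr, rfl⟩ := h
  obtain ⟨a, ha, hmin⟩ := Set.exists_min_image {b | (b, true) ∈ A} id
    ((A.finite_toSet.image Prod.fst).subset fun b hb => ⟨_, hb, rfl⟩) ⟨b, hr⟩
  exact ⟨a, ha, hmin⟩

lemma DIME.mem_Pset_of_phatMem (h : E.symbols.Nodup) {X : Set σ} (hX : E.PhatMem X) :
    X ∈ Pset E.lang := by
  obtain ⟨p, hp, hty, rfl⟩ := hX
  intro u hu
  obtain ⟨v, hv, huv⟩ := DIME.exists_eqOn_of_mem_lang h hu hp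
  obtain ⟨hI, hD⟩ := notMem_zero_of_entryType1_or_entryType2 hty
  obtain ⟨q, hq, hqv⟩ := Clause.exists_forall_ne_zero_of_mem_iterLang
    (DIME.nodup_clause_symbols h hp) hI (fun q hq => (hD q hq).2) hv
  obtain ⟨a, ha⟩ := exists_isPhi (hD q hq).1
  exact ⟨a, ⟨q, hq, ha⟩, by rw [huv a (Clause.mem_symbols_of_mem hq ha.1)]; exact hqv a ha.1⟩

lemma DIME.nhatMem_of_mem_lang (h : E.symbols.Nodup) (hred : E.Reduced) {u : UWord σ}
    (hu : u ∈ E.lang) (a : σ) : E.NhatMem a (u a) := by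
  by_cases ha : a ∈ E.symbols
  swap
  · exact Or.inl ⟨ha, DIME.apply_eq_zero_of_mem_lang hu ha⟩
  obtain ⟨p, hp, q, hq, ⟨a, b⟩, hr, rfl⟩ := DIME.mem_symbols_iff.1 ha
  rcases hred p hp with h1 | hty
  · exact Or.inr (Or.inl ⟨p, hp, h1, q, hq, _, hr, rfl⟩)
  obtain ⟨v, hv, huv⟩ := DIME.exists_eqOn_of_mem_lang h hu hp
  rw [hty.elim And.left And.left, mem_iterLang_one] at hv
  rw [huv a (Clause.mem_symbols_of_mem hq hr)]
  rcases Clause.exists_of_mem_lang (DIME.nodup_clause_symbols h hp) hv hq with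
    ⟨m, hm, hvm⟩ | ⟨hv0, q', hq', hne⟩
  · obtain ⟨hle, heq⟩ := hvm _ hr
    cases b
    · exact Or.inr (Or.inr (Or.inr ⟨p, hp, hty, q, hq, hr, hm.cast_le_hi hle⟩))
    · refine Or.inr (Or.inr (Or.inl ⟨p, hp, hty, q, hq, hr, ?_⟩))
      rw [heq rfl]
      rcases Nat.lt_or_ge p.1.length 2 with hlen | hlen
      · exact Or.inl ⟨by have := List.length_pos_of_mem hq; omega, hm⟩
      · exact Or.inr ⟨hlen, Or.inl hm⟩
  · rw [hv0 _ hr]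
    cases b
    · exact Or.inr (Or.inr (Or.inr ⟨p, hp, hty, q, hq, hr, by simp⟩))
    · have hlen : 2 ≤ p.1.length := by
        by_contra hlt
        obtain ⟨x, hx⟩ := List.length_eq_one_iff.1
          (le_antisymm (by omega) (List.length_pos_of_mem hq))
        simp only [hx, List.mem_singleton] at hq hq'
        exact hne (hq'.trans hq.symm)
      exact Or.inr (Or.inr (Or.inl ⟨p, hp, hty, q, hq, hr, Or.inr ⟨hlen, Or.inr rfl⟩⟩))

lemma DIME.NhatMem.eq_zero_of_notMem_symbols {a : σ} {n : ℕ} (hn : E.NhatMem a n)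
    (ha : a ∉ E.symbols) : n = 0 := by
  rcases hn with ⟨-, hn⟩ | ⟨p, hp, -, q, hq, r, hr, rfl⟩ | ⟨p, hp, -, q, hq, hr, -⟩ |
    ⟨p, hp, -, q, hq, hr, -⟩
  · exact hn
  all_goals exact absurd (DIME.mem_symbols_iff.2 ⟨p, hp, q, hq, _, hr, rfl⟩) ha

lemma DIME.NhatMem.of_mem_atom (h : E.symbols.Nodup) {a : σ} {n : ℕ} (hn : E.NhatMem a n)
    {p : Clause σ × Iv} (hp : p ∈ E.clauses) (hty : EntryType2 p.1 p.2 ∨ EntryType3 p.1 p.2)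
    {q : Atom σ × Iv} (hq : q ∈ p.1) {b : Bool} (hr : (a, b) ∈ q.1) :
    (b = true → q.2.Mem n ∨ n = 0) ∧ (b = false → (n : ℕ∞) ≤ q.2.hi) := by
  have hloc : ∀ {p' : Clause σ × Iv} {q' : Atom σ × Iv} {r' : σ × Bool}, p' ∈ E.clauses →
      q' ∈ p'.1 → r' ∈ q'.1 → r'.1 = a → p' = p ∧ q' = q ∧ r' = (a, b) :=
    fun hp' hq' hr' hr1 => DIME.eq_of_mem_of_fst_eq h hp' hq' hr' hp hq hr hr1
  rcases hn with ⟨ha, -⟩ | ⟨p', hp', h1, q', hq', r', hr', hr'a⟩ | ⟨p', hp', -, q', hq', hr', hn⟩ |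
    ⟨p', hp', -, q', hq', hr', hn⟩
  · exact absurd (DIME.mem_symbols_iff.2 ⟨p, hp, q, hq, _, hr, rfl⟩) ha
  · obtain ⟨rfl, -, -⟩ := hloc hp' hq' hr' hr'a
    have := h1.1.symm.trans (hty.elim And.left And.left)
    simp [Iv.iplus, Iv.one] at this
  · obtain ⟨rfl, rfl, hb⟩ := hloc hp' hq' hr' rfl
    cases hb
    exact ⟨fun _ => hn.elim (fun h => Or.inl h.2) (fun h => h.2), by simp⟩
  · obtain ⟨rfl, rfl, hb⟩ := hloc hp' hq' hr' rfl
    cases hb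
    exact ⟨by simp, fun _ => hn⟩

end Reduced

section Completeness

variable {σ : Type*} [LinearOrder σ] {E : DIME σ} {w : UWord σ}

lemma Atom.exists_mem_lang_eq_zero_of_notMem_trueSymbols {A : Atom σ} (hA : A.symbols.Nodup) :
    ∃ x ∈ A.lang, ∀ s ∉ A.trueSymbols, x s = 0 :=
  ⟨A.trueSymbols.indicator 1, Atom.indicator_mem_lang hA subset_rfl
    fun _ hs => List.mem_map_of_mem hs, fun _ hs => Set.indicator_of_notMem hs _⟩

lemma Atom.exists_mem_iterLang_apply_eq {A : Atom σ} (hA : A.symbols.Nodup) {a : σ} {b : Bool}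
    (hr : (a, b) ∈ A) {J : Iv} {m n : ℕ} (hm : J.Mem m) (hnm : n ≤ m) (hb : b = true → m = n) :
    ∃ v ∈ iterLang A.lang J, v a = n := by
  obtain ⟨x₁, hx₁, hx₁a⟩ : ∃ x ∈ A.lang, x a = 1 := by
    refine ⟨(insert a A.trueSymbols).indicator 1,
      Atom.indicator_mem_lang hA (Set.subset_insert _ _) fun s hs => ?_, by simp⟩
    rcases hs with rfl | hs
    exacts [List.mem_map_of_mem hr, List.mem_map_of_mem hs]
  obtain ⟨x₀, hx₀, hx₀0⟩ := Atom.exists_mem_lang_eq_zero_of_notMem_trueSymbols hA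
  have hx₀a : b = false → x₀ a = 0 := by
    rintro rfl
    exact hx₀0 a fun ha => by simpa using List.inj_on_of_nodup_map hA hr ha rfl
  refine ⟨listSum (List.replicate n x₁ ++ List.replicate (m - n) x₀),
    listSum_mem_iterLang (fun x hx => ?_) (by simpa [Nat.add_sub_cancel' hnm] using hm), ?_⟩
  · rcases List.mem_append.1 hx with hx | hx <;> rw [List.eq_of_mem_replicate hx]
    exacts [hx₁, hx₀]
  · rw [listSum_append_apply, listSum_replicate_apply, listSum_replicate_apply, hx₁a]
    cases b
    · rw [hx₀a rfl]; simp
    · simp [hb rfl]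

lemma DIME.SatHat.exists_atom_forall_true_ne_zero (h : E.symbols.Nodup) (hw : E.SatHat w)
    {p : Clause σ × Iv} (hp : p ∈ E.clauses) (hty : EntryType1 p.1 p.2 ∨ EntryType2 p.1 p.2) :
    ∃ q ∈ p.1, ∃ φ, (φ, true) ∈ q.1 ∧ ∀ s, (s, true) ∈ q.1 → w s ≠ 0 := by
  obtain ⟨-, -, hP, hK⟩ := hw
  obtain ⟨φ, ⟨q, hq, hφ⟩, hwφ⟩ := hP _ ⟨p, hp, hty, rfl⟩
  refine ⟨q, hq, φ, hφ.1, fun s hs => ?_⟩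
  have hle : w φ ≤ w s :=
    hK (s, φ) fun u hu => (DIME.apply_eq_apply_of_mem_lang h hp hq hφ.1 hs hu).le
  omega

lemma DIME.SatHat.exists_mem_iterLang_forall_eq_zero (h : E.symbols.Nodup) (hred : E.Reduced)
    (hw : E.SatHat w) {X : Set σ} (hX : ∀ a ∈ X, w a = 0) {p : Clause σ × Iv}
    (hp : p ∈ E.clauses) : ∃ v ∈ iterLang p.1.lang p.2, ∀ a ∈ X, v a = 0 := by
  have hD := DIME.nodup_clause_symbols h hp
  have hvanish : ∀ q ∈ p.1, (∀ s, (s, true) ∈ q.1 → w s ≠ 0) →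
      ∃ x ∈ q.1.lang, ∀ n, ∀ a ∈ X, listSum (List.replicate n x) a = 0 := fun q hq hq0 => by
    obtain ⟨x, hx, hx0⟩ :=
      Atom.exists_mem_lang_eq_zero_of_notMem_trueSymbols (Clause.nodup_atom_symbols hD hq)
    refine ⟨x, hx, fun n a ha => ?_⟩
    rw [listSum_replicate_apply, hx0 a fun hs => hq0 a hs (hX a ha), mul_zero]
  rcases hred p hp with h1 | h2 | h3
  · obtain ⟨q, hq, -, -, hq0⟩ := hw.exists_atom_forall_true_ne_zero h hp (Or.inl h1)
    obtain ⟨x, hx, hx0⟩ := hvanish q hq hq0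
    refine ⟨_, ?_, hx0 1⟩
    rw [h1.1]
    refine listSum_mem_iterLang (fun y hy => ?_) (by simp [Iv.Mem, Iv.iplus])
    rw [List.eq_of_mem_replicate hy]
    exact ⟨q, hq, by rw [(h1.2.2 q hq).1, mem_iterLang_one]; exact hx⟩
  · obtain ⟨q, hq, φ, hφ, hq0⟩ := hw.exists_atom_forall_true_ne_zero h hp (Or.inr h2)
    have hm : q.2.Mem (w φ) :=
      (((hw.2.1 φ).of_mem_atom h hp (Or.inl h2) hq hφ).1 rfl).resolve_right (hq0 φ hφ)
    obtain ⟨x, hx, hx0⟩ := hvanish q hq hq0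
    refine ⟨_, ?_, hx0 (w φ)⟩
    rw [h2.1, mem_iterLang_one]
    refine ⟨q, hq, listSum_mem_iterLang (fun y hy => ?_) (by simpa using hm)⟩
    rw [List.eq_of_mem_replicate hy]
    exact hx
  · by_cases hne : ∃ q, q ∈ p.1
    · obtain ⟨q, hq⟩ := hne
      refine ⟨UWord.zero, ?_, fun _ _ => rfl⟩
      rw [h3.1, mem_iterLang_one]
      exact ⟨q, hq, listSum_mem_iterLang (l := []) (by simp) (h3.2 q hq)⟩
    · -- an empty clause is vacuously of type 2 as well, and then `∅ ∈ P̂_E`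
      have h2 : EntryType2 p.1 p.2 := ⟨h3.1, fun q hq => absurd ⟨q, hq⟩ hne⟩
      obtain ⟨q, hq, -⟩ := hw.exists_atom_forall_true_ne_zero h hp (Or.inr h2)
      exact absurd ⟨q, hq⟩ hne

lemma DIME.SatHat.exists_mem_lang_forall_eq_zero (h : E.symbols.Nodup) (hred : E.Reduced)
    (hw : E.SatHat w) {X : Set σ} (hX : ∀ a ∈ X, w a = 0) : ∃ u ∈ E.lang, ∀ a ∈ X, u a = 0 :=
  exists_mem_listConcLang (P := fun u => ∀ a ∈ X, u a = 0) (fun _ _ => rfl)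
    (fun _ _ hu hv a ha => by simp [hu a ha, hv a ha])
    fun _ hp => hw.exists_mem_iterLang_forall_eq_zero h hred hX hp

lemma DIME.SatHat.exists_mem_iterLang_apply_eq (h : E.symbols.Nodup) (hred : E.Reduced)
    (hw : E.SatHat w) {p : Clause σ × Iv} (hp : p ∈ E.clauses) {q : Atom σ × Iv} (hq : q ∈ p.1)
    {a : σ} {b : Bool} (hr : (a, b) ∈ q.1) (hwa : w a ≠ 0) :
    ∃ v ∈ iterLang p.1.lang p.2, v a = w a := by
  have hA := Clause.nodup_atom_symbols (DIME.nodup_clause_symbols h hp) hq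
  rcases hred p hp with h1 | hty
  · obtain ⟨x, hx, hxa⟩ := Atom.exists_mem_iterLang_apply_eq hA hr (J := Iv.one) (m := 1)
      (by simp [Iv.Mem, Iv.one]) le_rfl fun _ => rfl
    refine ⟨listSum (List.replicate (w a) x), ?_, by rw [listSum_replicate_apply, hxa, mul_one]⟩
    rw [h1.1]
    refine listSum_mem_iterLang (fun y hy => ?_) (by simp [Iv.Mem, Iv.iplus]; omega)
    rw [List.eq_of_mem_replicate hy]
    exact ⟨q, hq, by rw [(h1.2.2 q hq).1]; exact hx⟩
  have hone : p.2 = Iv.one := hty.elim And.left And.left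
  suffices ∃ v ∈ iterLang q.1.lang q.2, v a = w a by
    obtain ⟨v, hv, hva⟩ := this
    exact ⟨v, by rw [hone, mem_iterLang_one]; exact ⟨q, hq, hv⟩, hva⟩
  have hN := (hw.2.1 a).of_mem_atom h hp hty hq hr
  cases b
  · rcases le_or_gt (q.2.lo : ℕ∞) q.2.hi with hlohi | hlt
    · refine Atom.exists_mem_iterLang_apply_eq hA hr (m := max (w a) q.2.lo)
        (Or.inl ⟨le_max_right _ _, ?_⟩) (le_max_left _ _) nofun
      exact max_le (hN.2 rfl) hlohi
    · -- `q.2` admits no positive count, so `(a, a) ∈ C_E`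
      refine absurd (hw.1 (a, a) fun u hu => ?_) (by simp [hwa])
      simp [DIME.apply_eq_zero_of_hi_lt_lo h hp hone hq hlt hr hu]
  · exact Atom.exists_mem_iterLang_apply_eq hA hr ((hN.1 rfl).resolve_right hwa) le_rfl
      fun _ => rfl

lemma DIME.SatHat.exists_mem_lang_apply_eq (h : E.symbols.Nodup) (hred : E.Reduced)
    (hw : E.SatHat w) (a : σ) : ∃ u ∈ E.lang, u a = w a := by
  by_cases hwa : w a = 0
  · obtain ⟨u, hu, hu0⟩ := hw.exists_mem_lang_forall_eq_zero h hred (X := {a}) (by simpa using hwa)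
    exact ⟨u, hu, by rw [hu0 a rfl, hwa]⟩
  have ha : a ∈ E.symbols := by_contra fun ha => hwa ((hw.2.1 a).eq_zero_of_notMem_symbols ha)
  obtain ⟨p, hp, q, hq, ⟨a, b⟩, hr, rfl⟩ := DIME.mem_symbols_iff.1 ha
  obtain ⟨v, hv, hva⟩ := hw.exists_mem_iterLang_apply_eq h hred hp hq hr hwa
  have hne : ∀ p ∈ E.clauses, (iterLang p.1.lang p.2).Nonempty := fun _ hp =>
    (hw.exists_mem_iterLang_forall_eq_zero h hred (X := ∅) (by simp) hp).imp fun _ hv => hv.1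
  obtain ⟨u, hu, huv⟩ := DIME.exists_mem_lang_eqOn h hne hp hv
  exact ⟨u, hu, (huv _ (Clause.mem_symbols_of_mem hq hr)).trans hva⟩

end Completeness

theorem statement6_general {σ : Type} [LinearOrder σ]
    (E : DIME σ) (hE : E.WF) (hred : E.Reduced) (w : UWord σ) :
    SatTuple (DIME.lang E) w ↔ E.SatHat w := by
  have h := hE.2
  constructor
  · rintro ⟨hC, hN, hP, hK⟩
    refine ⟨hC, fun a => ?_, fun X hX => hP X (DIME.mem_Pset_of_phatMem h hX), hK⟩
    obtain ⟨u, hu, hua⟩ := hN a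
    rw [← show u a = w a from hua]
    exact DIME.nhatMem_of_mem_lang h hred hu a
  · intro hw
    refine ⟨hw.1, fun a => hw.exists_mem_lang_apply_eq h hred a, fun X hX => ?_, hw.2.2.2⟩
    by_contra! hX0
    obtain ⟨u, hu, hu0⟩ := hw.exists_mem_lang_forall_eq_zero h hred hX0
    obtain ⟨a, ha, hua⟩ := hX u hu
    exact hua (hu0 a ha)

/-- For every reduced DIME `E` and every unordered word `w`:
`w ⊨ Δ_E` if and only if `w ⊨ Δ̂_E`. -/
theorem statement6 {σ : Type} [LinearOrder σ] [Fintype σ]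
    (E : DIME σ) (hE : E.WF) (hred : E.Reduced) (w : UWord σ) :
    SatTuple (DIME.lang E) w ↔ E.SatHat w :=
  statement6_general E hE hred w
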